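/- arXiv:2502.15787 — 4 statements merged into one kernel-verified Lean document; each statement's English description precedes it below -/
import Mathlib

section
/- Under the hypotheses of the Read–Bajraktarević construction, assume additionally that each F_p satisfies |F_p(x, y) − F_p(x, y′)| ≤ t_p |y − y′| for all x ∈ [x_0, x_P] and y, y′ ∈ ℝ, where 0 < t_p < 1. Then T is a contraction on the metric space (C, d), where d(h, h′) = max{|h(x) − h′(x)| : x ∈ [x_0, x_P]}, with Lipschitz constant at most t := max{t_1, ..., t_P} < 1; i.e., d(Th, Th′) ≤ t · d(h, h′) for all h, h′ ∈ C. -/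
/-!
Every point `u` of `[x 0, x P]` lies between two consecutive nodes `x (p - 1)` and `x p`, so by
the intermediate value theorem it is `l_p s` for some `s ∈ [x 0, x P]`. There
`|T h u - T h' u| = |F_p(s, h s) - F_p(s, h' s)| ≤ t_p |h s - h' s| ≤ (max t) d(h, h')`.
-/

open Set

lemma uIcc_subset_iUnion_uIcc_succ {α : Type*} [LinearOrder α] (x : ℕ → α) (n : ℕ) :
    uIcc (x 0) (x (n + 1)) ⊆ ⋃ k ≤ n, uIcc (x k) (x (k + 1)) := by
  induction n with
  | zero => exact fun y hy => mem_iUnion₂.2 ⟨0, le_rfl, hy⟩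
  | succ n ih =>
    refine uIcc_subset_uIcc_union_uIcc.trans (union_subset (ih.trans ?_) ?_)
    · exact biUnion_mono (fun k hk => Nat.le_succ_of_le hk) fun _ _ => le_rfl
    · exact fun y hy => mem_iUnion₂.2 ⟨n + 1, le_rfl, hy⟩

lemma exists_affine_piece_eq {P : ℕ} (hP : 1 ≤ P) {x a b : ℕ → ℝ}
    (hl0 : ∀ p, 1 ≤ p → p ≤ P → a p * x 0 + b p = x (p - 1))
    (hlP : ∀ p, 1 ≤ p → p ≤ P → a p * x P + b p = x p) {u : ℝ} (hu : u ∈ Icc (x 0) (x P)) :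
    ∃ p, 1 ≤ p ∧ p ≤ P ∧ ∃ s ∈ Icc (x 0) (x P), a p * s + b p = u := by
  have hu' : u ∈ uIcc (x 0) (x (P - 1 + 1)) := by
    rw [Nat.sub_add_cancel hP]; exact Icc_subset_uIcc hu
  obtain ⟨k, hk, huk⟩ := mem_iUnion₂.1 (uIcc_subset_iUnion_uIcc_succ x (P - 1) hu')
  replace hk : k + 1 ≤ P := by omega
  have hl : ContinuousOn (fun s => a (k + 1) * s + b (k + 1)) (uIcc (x 0) (x P)) := by fun_prop
  have hends := intermediate_value_uIcc hl
  rw [hl0 (k + 1) k.succ_pos hk, hlP (k + 1) k.succ_pos hk, Nat.add_sub_cancel] at hends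
  obtain ⟨s, hs, hsu⟩ := hends huk
  exact ⟨k + 1, k.succ_pos, hk, s, uIcc_of_le (hu.1.trans hu.2) ▸ hs, hsu⟩

theorem stmt_3_general (P : ℕ) (hP : 1 ≤ P) (x : ℕ → ℝ)
    (a b : ℕ → ℝ)
    (hl0 : ∀ p, 1 ≤ p → p ≤ P → a p * x 0 + b p = x (p - 1))
    (hlP : ∀ p, 1 ≤ p → p ≤ P → a p * x P + b p = x p)
    (F : ℕ → ℝ → ℝ → ℝ) (t : ℕ → ℝ)
    (ht : ∀ p, 1 ≤ p → p ≤ P → 0 < t p ∧ t p < 1)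
    (hFlip : ∀ p, 1 ≤ p → p ≤ P → ∀ s ∈ Set.Icc (x 0) (x P), ∀ u v : ℝ,
      |F p s u - F p s v| ≤ t p * |u - v|)
    (h h' : ℝ → ℝ)
    (hh : ContinuousOn h (Set.Icc (x 0) (x P)))
    (hh' : ContinuousOn h' (Set.Icc (x 0) (x P)))
    (Th Th' : ℝ → ℝ)
    (hTh : ∀ p, 1 ≤ p → p ≤ P → ∀ s ∈ Set.Icc (x 0) (x P),
      Th (a p * s + b p) = F p s (h s))
    (hTh' : ∀ p, 1 ≤ p → p ≤ P → ∀ s ∈ Set.Icc (x 0) (x P),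
      Th' (a p * s + b p) = F p s (h' s)) :
    ((Finset.Icc 1 P).sup' (Finset.nonempty_Icc.mpr hP) t) < 1 ∧
    (⨆ u : Set.Icc (x 0) (x P), |Th u.1 - Th' u.1|) ≤
      ((Finset.Icc 1 P).sup' (Finset.nonempty_Icc.mpr hP) t) *
        ⨆ u : Set.Icc (x 0) (x P), |h u.1 - h' u.1| := by
  set tmax := (Finset.Icc 1 P).sup' (Finset.nonempty_Icc.mpr hP) t
  have le_tmax : ∀ p, 1 ≤ p → p ≤ P → t p ≤ tmax := fun p hp1 hpP =>
    Finset.le_sup' t (Finset.mem_Icc.2 ⟨hp1, hpP⟩)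
  have tmax_nonneg : 0 ≤ tmax := (ht 1 le_rfl hP).1.le.trans (le_tmax 1 le_rfl hP)
  have hbdd : BddAbove (range fun u : Set.Icc (x 0) (x P) => |h u.1 - h' u.1|) :=
    image_eq_range (fun u => |h u - h' u|) _ ▸ isCompact_Icc.bddAbove_image (hh.sub hh').abs
  refine ⟨(Finset.sup'_lt_iff _).2 fun p hp => (ht p (Finset.mem_Icc.1 hp).1
    (Finset.mem_Icc.1 hp).2).2, Real.iSup_le (fun ⟨u, hu⟩ => ?_)
    (mul_nonneg tmax_nonneg (Real.iSup_nonneg fun _ => abs_nonneg _))⟩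
  obtain ⟨p, hp1, hpP, s, hs, rfl⟩ := exists_affine_piece_eq hP hl0 hlP hu
  rw [hTh p hp1 hpP s hs, hTh' p hp1 hpP s hs]
  calc |F p s (h s) - F p s (h' s)| ≤ t p * |h s - h' s| := hFlip p hp1 hpP s hs _ _
    _ ≤ tmax * ⨆ u : Set.Icc (x 0) (x P), |h u.1 - h' u.1| :=
      mul_le_mul (le_tmax p hp1 hpP) (le_ciSup hbdd ⟨s, hs⟩) (abs_nonneg _) tmax_nonneg

/-- under the Read–Bajraktarević hypotheses, if moreover each `F p` is a
uniform contraction in the second variable with ratio `t p ∈ (0,1)`, then the operator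
`T` (with `(T h)(l p s) = F p s (h s)`) is a contraction on `(C, d)` with Lipschitz
constant at most `tmax := max {t 1, ..., t P} < 1`, where
`d(h, h') = sup_{u ∈ [x 0, x P]} |h u − h' u|`. -/
theorem stmt_3 (P : ℕ) (hP : 1 ≤ P) (x y : ℕ → ℝ)
    (hx : ∀ i, i < P → x i < x (i + 1))
    (a b : ℕ → ℝ)
    (ha : ∀ p, 1 ≤ p → p ≤ P → 0 < a p)
    (hl0 : ∀ p, 1 ≤ p → p ≤ P → a p * x 0 + b p = x (p - 1))
    (hlP : ∀ p, 1 ≤ p → p ≤ P → a p * x P + b p = x p)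
    (F : ℕ → ℝ → ℝ → ℝ) (t : ℕ → ℝ)
    (hFcont : ∀ p, 1 ≤ p → p ≤ P → ∀ v : ℝ,
      ContinuousOn (fun s : ℝ => F p s v) (Set.Icc (x 0) (x P)))
    (hF0 : ∀ p, 1 ≤ p → p ≤ P → F p (x 0) (y 0) = y (p - 1))
    (hFP : ∀ p, 1 ≤ p → p ≤ P → F p (x P) (y P) = y p)
    (ht : ∀ p, 1 ≤ p → p ≤ P → 0 < t p ∧ t p < 1)
    (hFlip : ∀ p, 1 ≤ p → p ≤ P → ∀ s ∈ Set.Icc (x 0) (x P), ∀ u v : ℝ,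
      |F p s u - F p s v| ≤ t p * |u - v|)
    (h h' : ℝ → ℝ)
    (hh : ContinuousOn h (Set.Icc (x 0) (x P)))
    (hh0 : h (x 0) = y 0) (hhP : h (x P) = y P)
    (hh' : ContinuousOn h' (Set.Icc (x 0) (x P)))
    (hh'0 : h' (x 0) = y 0) (hh'P : h' (x P) = y P)
    (Th Th' : ℝ → ℝ)
    (hTh : ∀ p, 1 ≤ p → p ≤ P → ∀ s ∈ Set.Icc (x 0) (x P),
      Th (a p * s + b p) = F p s (h s))
    (hTh' : ∀ p, 1 ≤ p → p ≤ P → ∀ s ∈ Set.Icc (x 0) (x P),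
      Th' (a p * s + b p) = F p s (h' s)) :
    ((Finset.Icc 1 P).sup' (Finset.nonempty_Icc.mpr hP) t) < 1 ∧
    (⨆ u : Set.Icc (x 0) (x P), |Th u.1 - Th' u.1|) ≤
      ((Finset.Icc 1 P).sup' (Finset.nonempty_Icc.mpr hP) t) *
        ⨆ u : Set.Icc (x 0) (x P), |h u.1 - h' u.1| :=
  stmt_3_general P hP x a b hl0 hlP F t ht hFlip h h' hh hh' Th Th' hTh hTh'
end

section
/- Under the hypotheses of the Read–Bajraktarević construction with contraction ratios t_p < 1, there exists a unique continuous function g : [x_0, x_P] → ℝ with g(x_0) = y_0, g(x_P) = y_P that is a fixed point of the operator T; equivalently, g is the unique function in C satisfying the functional (self-referential) equation g(l_p(x)) = F_p(x, g(x)) for all x ∈ [x_0, x_P] and all p = 1,...,P. -/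
/-!
The Read–Bajraktarević operator `T` is a contraction, with ratio `max t_p < 1`, of the complete
space of continuous functions on `[x₀, x_P]` with the prescribed endpoint values: on the piece
`A_p` it acts through `F_p`, which is `t_p`-Lipschitz in the second variable. The endpoint
conditions on `F_p` make adjacent pieces of `T h` agree at the shared knot, so `T h` is again
continuous. Since the maps `l_p` carry `[x₀, x_P]` onto the pieces `A_p`, which cover
`[x₀, x_P]`, the fixed points of `T` are exactly the solutions of the functional equation, and
Banach's theorem gives existence and uniqueness.
-/

open Set NNReal

theorem Finset.exists_lt_one_forall_le {ι : Type*} (S : Finset ι) {t : ι → ℝ}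
    (ht : ∀ i ∈ S, t i < 1) : ∃ K : ℝ≥0, K < 1 ∧ ∀ i ∈ S, t i ≤ K :=
  ⟨S.sup fun i => (t i).toNNReal,
    (Finset.sup_lt_iff zero_lt_one).2 fun i hi => Real.toNNReal_lt_one.2 (ht i hi),
    fun _ hi => (Real.le_coe_toNNReal _).trans <|
      NNReal.coe_le_coe.2 (Finset.le_sup (f := fun i => (t i).toNNReal) hi)⟩

theorem Icc_eq_biUnion_Icc_sub_one {x : ℕ → ℝ} {P : ℕ} (hx : MonotoneOn x (Iic P)) (hP : 1 ≤ P) :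
    Icc (x 0) (x P) = ⋃ p ∈ Finset.Icc 1 P, Icc (x (p - 1)) (x p) := by
  induction P with
  | zero => omega
  | succ n ih =>
    rcases Nat.eq_zero_or_pos n with rfl | hn
    · simp
    rw [← Finset.insert_Icc_right_eq_Icc_add_one (by omega), Finset.set_biUnion_insert,
      ← ih (hx.mono (Iic_subset_Iic.2 n.le_succ)) hn, Nat.add_sub_cancel, union_comm,
      Icc_union_Icc_eq_Icc]
    · exact hx (by simp) (by simp) (Nat.zero_le n)
    · exact hx (by simp) (by simp) n.le_succ

theorem Icc_sub_one_subset_Icc {x : ℕ → ℝ} {P p : ℕ} (hx : MonotoneOn x (Iic P)) (hpP : p ≤ P) :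
    Icc (x (p - 1)) (x p) ⊆ Icc (x 0) (x P) :=
  Icc_subset_Icc (hx (by simp) (by simp; omega) (Nat.zero_le _))
    (hx (by simpa using hpP) (by simp) hpP)

theorem eq_add_one_and_eq_of_mem_Icc_sub_one {x : ℕ → ℝ} {P : ℕ} (hx : StrictMonoOn x (Iic P))
    {p q : ℕ} {u : ℝ} (hpq : p < q) (hq : q ≤ P) (hup : u ∈ Icc (x (p - 1)) (x p))
    (huq : u ∈ Icc (x (q - 1)) (x q)) : q = p + 1 ∧ u = x p := by
  have hle : x p ≤ x (q - 1) := hx.monotoneOn (by simp; omega) (by simp; omega) (by omega)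
  have heq : x p = x (q - 1) := le_antisymm hle (huq.1.trans hup.2)
  exact ⟨by have := hx.injOn (by simp; omega) (by simp; omega) heq; omega,
    le_antisymm hup.2 (heq ▸ huq.1)⟩

theorem ContinuousOn.apply_of_lipschitzWith {α β γ : Type*} [TopologicalSpace α]
    [PseudoEMetricSpace β] [PseudoEMetricSpace γ] {F : α → β → γ} {s : Set α} {h : α → β}
    {K : ℝ≥0} (hh : ContinuousOn h s) (hF : ∀ v, ContinuousOn (F · v) s)
    (hL : ∀ a ∈ s, LipschitzWith K (F a)) : ContinuousOn (fun a => F a (h a)) s :=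
  (continuousOn_prod_of_continuousOn_lipschitzOnWith' (Function.uncurry F) (t := univ) K
    (fun a ha => (hL a ha).lipschitzOnWith) fun v _ => hF v).comp
    (continuousOn_id.prodMk hh) fun _ ha => ⟨ha, mem_univ _⟩

section EndpointMaps

variable {a b : ℝ}

def endpointMaps (hab : a ≤ b) (y₀ y₁ : ℝ) : Set C(Icc a b, ℝ) :=
  {f | f ⟨a, left_mem_Icc.2 hab⟩ = y₀ ∧ f ⟨b, right_mem_Icc.2 hab⟩ = y₁}

instance (hab : a ≤ b) (y₀ y₁ : ℝ) : CompleteSpace (endpointMaps hab y₀ y₁) :=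
  IsClosed.completeSpace_coe (hs := (isClosed_eq (continuous_eval_const _) continuous_const).inter
    (isClosed_eq (continuous_eval_const _) continuous_const))

theorem endpointMaps_nonempty (hab : a < b) (y₀ y₁ : ℝ) :
    (endpointMaps hab.le y₀ y₁).Nonempty :=
  ⟨⟨fun u => y₀ + (u - a) / (b - a) * (y₁ - y₀), by fun_prop⟩,
    by simp, by simp [div_self (sub_ne_zero.2 hab.ne')]⟩

/-- Banach's fixed point theorem in `endpointMaps`, stated for an operator on functions `ℝ → ℝ`
that are looked at on `[a, b]` only (taking `d = 0` in `hTK` shows that `T h` there depends only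
on `h` there). -/
theorem exists_eqOn_of_contraction (hab : a < b) (y₀ y₁ : ℝ)
    (T : (ℝ → ℝ) → ℝ → ℝ) {K : ℝ≥0} (hK : K < 1)
    (hT : ∀ h, ContinuousOn h (Icc a b) → h a = y₀ → h b = y₁ →
      ContinuousOn (T h) (Icc a b) ∧ T h a = y₀ ∧ T h b = y₁)
    (hTK : ∀ h k d, (∀ s ∈ Icc a b, dist (h s) (k s) ≤ d) →
      ∀ u ∈ Icc a b, dist (T h u) (T k u) ≤ K * d) :
    ∃ g : ℝ → ℝ, (ContinuousOn g (Icc a b) ∧ g a = y₀ ∧ g b = y₁ ∧ EqOn (T g) g (Icc a b)) ∧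
      ∀ g' : ℝ → ℝ, (ContinuousOn g' (Icc a b) ∧ g' a = y₀ ∧ g' b = y₁ ∧
        EqOn (T g') g' (Icc a b)) → EqOn g' g (Icc a b) := by
  set C := endpointMaps hab.le y₀ y₁
  have : Nonempty C := (endpointMaps_nonempty hab y₀ y₁).to_subtype
  let ext (f : C) : ℝ → ℝ := IccExtend hab.le f.1
  have hext (f : C) : ContinuousOn (ext f) (Icc a b) ∧ ext f a = y₀ ∧ ext f b = y₁ :=
    ⟨f.1.continuous.Icc_extend'.continuousOn, by simp [ext, f.2.1], by simp [ext, f.2.2]⟩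
  have hext_mem (f : C) {u : ℝ} (hu : u ∈ Icc a b) : ext f u = f.1 ⟨u, hu⟩ :=
    IccExtend_of_mem _ _ hu
  have hText (f : C) := hT _ (hext f).1 (hext f).2.1 (hext f).2.2
  let T' (f : C) : C :=
    ⟨⟨(Icc a b).domRestrict (T (ext f)), (hText f).1.domRestrict⟩, (hText f).2⟩
  have hT' : ContractingWith K T' := by
    refine ⟨hK, LipschitzWith.of_dist_le_mul fun f g => ?_⟩
    refine (ContinuousMap.dist_le (by positivity)).2 fun u => hTK _ _ _ (fun s hs => ?_) u u.2
    rw [hext_mem f hs, hext_mem g hs, Subtype.dist_eq]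
    exact ContinuousMap.dist_apply_le_dist _
  have hloc (h k : ℝ → ℝ) (hhk : EqOn h k (Icc a b)) : EqOn (T h) (T k) (Icc a b) :=
    fun u hu => dist_le_zero.1 <| by simpa using hTK h k 0 (fun s hs => by simp [hhk hs]) u hu
  set f₀ := ContractingWith.fixedPoint T' hT'
  have hf₀ : T' f₀ = f₀ := hT'.fixedPoint_isFixedPt
  refine ⟨ext f₀, ⟨(hext f₀).1, (hext f₀).2.1, (hext f₀).2.2, fun u hu => ?_⟩, ?_⟩
  · rw [hext_mem f₀ hu]
    exact congr($hf₀.1 ⟨u, hu⟩)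
  rintro g' ⟨hg', hg'a, hg'b, hTg'⟩ u hu
  let f' : C := ⟨⟨(Icc a b).domRestrict g', hg'.domRestrict⟩, hg'a, hg'b⟩
  have hf' : T' f' = f' := by
    ext v
    exact (hloc (ext f') g' (fun s hs => hext_mem f' hs) v.2).trans (hTg' v.2)
  rw [hext_mem f₀ hu]
  exact congr($(hT'.fixedPoint_unique hf').1 ⟨u, hu⟩)

end EndpointMaps

section ReadBajraktarevic

variable {P : ℕ} {x y a b : ℕ → ℝ} {F : ℕ → ℝ → ℝ → ℝ} {h : ℝ → ℝ} {p : ℕ}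

theorem image_affine_Icc_eq_Icc_sub_one (hap : 0 < a p) (hl0 : a p * x 0 + b p = x (p - 1))
    (hlP : a p * x P + b p = x p) :
    (fun s => a p * s + b p) '' Icc (x 0) (x P) = Icc (x (p - 1)) (x p) := by
  rw [image_affine_Icc' hap, hl0, hlP]

theorem mul_add_mem_Icc_sub_one (hap : 0 < a p) (hl0 : a p * x 0 + b p = x (p - 1))
    (hlP : a p * x P + b p = x p) {s : ℝ} (hs : s ∈ Icc (x 0) (x P)) :
    a p * s + b p ∈ Icc (x (p - 1)) (x p) :=
  image_affine_Icc_eq_Icc_sub_one hap hl0 hlP ▸ mem_image_of_mem _ hs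

theorem div_sub_mem_Icc_of_mem_Icc_sub_one (hap : 0 < a p) (hl0 : a p * x 0 + b p = x (p - 1))
    (hlP : a p * x P + b p = x p) {u : ℝ} (hu : u ∈ Icc (x (p - 1)) (x p)) :
    (u - b p) / a p ∈ Icc (x 0) (x P) ∧ a p * ((u - b p) / a p) + b p = u := by
  rw [← image_affine_Icc_eq_Icc_sub_one hap hl0 hlP] at hu
  obtain ⟨s, hs, rfl⟩ := hu
  simpa [hap.ne'] using hs

/-- At a knot both adjacent pieces qualify; the choice is irrelevant by
`readBajraktarevic_eq_of_mem`. -/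
noncomputable def pieceIndex (P : ℕ) (x : ℕ → ℝ) (u : ℝ) : ℕ :=
  Classical.epsilon fun p => p ∈ Finset.Icc 1 P ∧ u ∈ Icc (x (p - 1)) (x p)

noncomputable def readBajraktarevic (P : ℕ) (x a b : ℕ → ℝ) (F : ℕ → ℝ → ℝ → ℝ) (h : ℝ → ℝ)
    (u : ℝ) : ℝ :=
  let p := pieceIndex P x u
  let s := (u - b p) / a p
  F p s (h s)

theorem pieceIndex_spec (hx : MonotoneOn x (Iic P)) (hP : 1 ≤ P) {u : ℝ}
    (hu : u ∈ Icc (x 0) (x P)) :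
    1 ≤ pieceIndex P x u ∧ pieceIndex P x u ≤ P ∧
      u ∈ Icc (x (pieceIndex P x u - 1)) (x (pieceIndex P x u)) := by
  rw [Icc_eq_biUnion_Icc_sub_one hx hP, mem_iUnion₂] at hu
  obtain ⟨p, hp, hu⟩ := hu
  obtain ⟨hp, hu⟩ := Classical.epsilon_spec (p := fun p => p ∈ Finset.Icc 1 P ∧
    u ∈ Icc (x (p - 1)) (x p)) ⟨p, hp, hu⟩
  exact ⟨(Finset.mem_Icc.1 hp).1, (Finset.mem_Icc.1 hp).2, hu⟩

theorem apply_div_sub_eq_of_mem_Icc_sub_one (hx : StrictMonoOn x (Iic P))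
    (ha : ∀ p, 1 ≤ p → p ≤ P → 0 < a p)
    (hl0 : ∀ p, 1 ≤ p → p ≤ P → a p * x 0 + b p = x (p - 1))
    (hlP : ∀ p, 1 ≤ p → p ≤ P → a p * x P + b p = x p)
    (hF0 : ∀ p, 1 ≤ p → p ≤ P → F p (x 0) (y 0) = y (p - 1))
    (hFP : ∀ p, 1 ≤ p → p ≤ P → F p (x P) (y P) = y p)
    (h0 : h (x 0) = y 0) (hP : h (x P) = y P) {p q : ℕ} (hp1 : 1 ≤ p) (hpP : p ≤ P)
    (hq1 : 1 ≤ q) (hqP : q ≤ P) {u : ℝ} (hup : u ∈ Icc (x (p - 1)) (x p))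
    (huq : u ∈ Icc (x (q - 1)) (x q)) :
    F p ((u - b p) / a p) (h ((u - b p) / a p)) = F q ((u - b q) / a q) (h ((u - b q) / a q)) := by
  -- Distinct pieces meet only at a knot `x p = x (q - 1)`, the image of `x P` under `l p` and
  -- of `x 0` under `l q`; there the endpoint conditions on `F` give both sides the value `y p`.
  wlog hpq : p ≤ q generalizing p q
  · exact (this hq1 hqP hp1 hpP huq hup (le_of_not_ge hpq)).symm
  obtain rfl | hpq := hpq.eq_or_lt
  · rfl
  obtain ⟨rfl, rfl⟩ := eq_add_one_and_eq_of_mem_Icc_sub_one hx hpq hqP hup huq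
  have hsP : (x p - b p) / a p = x P :=
    (div_eq_iff (ha p hp1 hpP).ne').2 (by linarith [hlP p hp1 hpP])
  have hs0 : (x p - b (p + 1)) / a (p + 1) = x 0 :=
    (div_eq_iff (ha _ hq1 hqP).ne').2 (by linarith [Nat.add_sub_cancel p 1 ▸ hl0 _ hq1 hqP])
  rw [hsP, hs0, hP, h0, hFP p hp1 hpP, hF0 _ hq1 hqP, Nat.add_sub_cancel]

theorem readBajraktarevic_eq_of_mem (hx : StrictMonoOn x (Iic P)) (hP : 1 ≤ P)
    (ha : ∀ p, 1 ≤ p → p ≤ P → 0 < a p)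
    (hl0 : ∀ p, 1 ≤ p → p ≤ P → a p * x 0 + b p = x (p - 1))
    (hlP : ∀ p, 1 ≤ p → p ≤ P → a p * x P + b p = x p)
    (hF0 : ∀ p, 1 ≤ p → p ≤ P → F p (x 0) (y 0) = y (p - 1))
    (hFP : ∀ p, 1 ≤ p → p ≤ P → F p (x P) (y P) = y p)
    (h0 : h (x 0) = y 0) (hhP : h (x P) = y P) (hp1 : 1 ≤ p) (hpP : p ≤ P) {u : ℝ}
    (hu : u ∈ Icc (x (p - 1)) (x p)) :
    readBajraktarevic P x a b F h u = F p ((u - b p) / a p) (h ((u - b p) / a p)) := by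
  obtain ⟨hq1, hqP, huq⟩ :=
    pieceIndex_spec hx.monotoneOn hP (Icc_sub_one_subset_Icc hx.monotoneOn hpP hu)
  exact apply_div_sub_eq_of_mem_Icc_sub_one hx ha hl0 hlP hF0 hFP h0 hhP hq1 hqP hp1 hpP huq hu

theorem readBajraktarevic_affine (hx : StrictMonoOn x (Iic P)) (hP : 1 ≤ P)
    (ha : ∀ p, 1 ≤ p → p ≤ P → 0 < a p)
    (hl0 : ∀ p, 1 ≤ p → p ≤ P → a p * x 0 + b p = x (p - 1))
    (hlP : ∀ p, 1 ≤ p → p ≤ P → a p * x P + b p = x p)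
    (hF0 : ∀ p, 1 ≤ p → p ≤ P → F p (x 0) (y 0) = y (p - 1))
    (hFP : ∀ p, 1 ≤ p → p ≤ P → F p (x P) (y P) = y p)
    (h0 : h (x 0) = y 0) (hhP : h (x P) = y P) (hp1 : 1 ≤ p) (hpP : p ≤ P) {s : ℝ}
    (hs : s ∈ Icc (x 0) (x P)) :
    readBajraktarevic P x a b F h (a p * s + b p) = F p s (h s) := by
  rw [readBajraktarevic_eq_of_mem hx hP ha hl0 hlP hF0 hFP h0 hhP hp1 hpP
      (mul_add_mem_Icc_sub_one (ha p hp1 hpP) (hl0 p hp1 hpP) (hlP p hp1 hpP) hs),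
    add_sub_cancel_right, mul_div_cancel_left₀ _ (ha p hp1 hpP).ne']

theorem readBajraktarevic_endpoints (hx : StrictMonoOn x (Iic P)) (hP : 1 ≤ P)
    (ha : ∀ p, 1 ≤ p → p ≤ P → 0 < a p)
    (hl0 : ∀ p, 1 ≤ p → p ≤ P → a p * x 0 + b p = x (p - 1))
    (hlP : ∀ p, 1 ≤ p → p ≤ P → a p * x P + b p = x p)
    (hF0 : ∀ p, 1 ≤ p → p ≤ P → F p (x 0) (y 0) = y (p - 1))
    (hFP : ∀ p, 1 ≤ p → p ≤ P → F p (x P) (y P) = y p)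
    (h0 : h (x 0) = y 0) (hhP : h (x P) = y P) :
    readBajraktarevic P x a b F h (x 0) = y 0 ∧ readBajraktarevic P x a b F h (x P) = y P := by
  have hx0P : x 0 ≤ x P := hx.monotoneOn (by simp) (by simp) (Nat.zero_le P)
  have h1 := readBajraktarevic_affine hx hP ha hl0 hlP hF0 hFP h0 hhP le_rfl hP
    (left_mem_Icc.2 hx0P)
  have h2 := readBajraktarevic_affine hx hP ha hl0 hlP hF0 hFP h0 hhP hP le_rfl
    (right_mem_Icc.2 hx0P)
  rw [hl0 1 le_rfl hP, h0, hF0 1 le_rfl hP] at h1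
  rw [hlP P hP le_rfl, hhP, hFP P hP le_rfl] at h2
  exact ⟨h1, h2⟩

theorem continuousOn_readBajraktarevic (hx : StrictMonoOn x (Iic P)) (hP : 1 ≤ P)
    (ha : ∀ p, 1 ≤ p → p ≤ P → 0 < a p)
    (hl0 : ∀ p, 1 ≤ p → p ≤ P → a p * x 0 + b p = x (p - 1))
    (hlP : ∀ p, 1 ≤ p → p ≤ P → a p * x P + b p = x p)
    (hFcont : ∀ p, 1 ≤ p → p ≤ P → ∀ v : ℝ,
      ContinuousOn (fun s : ℝ => F p s v) (Icc (x 0) (x P)))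
    (hF0 : ∀ p, 1 ≤ p → p ≤ P → F p (x 0) (y 0) = y (p - 1))
    (hFP : ∀ p, 1 ≤ p → p ≤ P → F p (x P) (y P) = y p) {K : ℝ≥0}
    (hL : ∀ p, 1 ≤ p → p ≤ P → ∀ s ∈ Icc (x 0) (x P), LipschitzWith K (F p s))
    (hh : ContinuousOn h (Icc (x 0) (x P))) (h0 : h (x 0) = y 0) (hhP : h (x P) = y P) :
    ContinuousOn (readBajraktarevic P x a b F h) (Icc (x 0) (x P)) := by
  rw [Icc_eq_biUnion_Icc_sub_one hx.monotoneOn hP, ← Finset.set_biUnion_coe, biUnion_eq_iUnion]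
  refine (locallyFinite_of_finite _).continuousOn_iUnion (fun _ => isClosed_Icc) fun ⟨p, hp⟩ => ?_
  obtain ⟨hp1, hpP⟩ := Finset.mem_Icc.1 hp
  have hpiece : ContinuousOn (fun u => F p ((u - b p) / a p) (h ((u - b p) / a p)))
      (Icc (x (p - 1)) (x p)) :=
    (hh.apply_of_lipschitzWith (hFcont p hp1 hpP) (hL p hp1 hpP)).comp (by fun_prop)
      fun u hu => (div_sub_mem_Icc_of_mem_Icc_sub_one (ha p hp1 hpP) (hl0 p hp1 hpP)
        (hlP p hp1 hpP) hu).1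
  exact hpiece.congr fun u hu =>
    readBajraktarevic_eq_of_mem hx hP ha hl0 hlP hF0 hFP h0 hhP hp1 hpP hu

theorem dist_readBajraktarevic_le (hx : MonotoneOn x (Iic P)) (hP : 1 ≤ P)
    (ha : ∀ p, 1 ≤ p → p ≤ P → 0 < a p)
    (hl0 : ∀ p, 1 ≤ p → p ≤ P → a p * x 0 + b p = x (p - 1))
    (hlP : ∀ p, 1 ≤ p → p ≤ P → a p * x P + b p = x p) {K : ℝ≥0}
    (hL : ∀ p, 1 ≤ p → p ≤ P → ∀ s ∈ Icc (x 0) (x P), LipschitzWith K (F p s))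
    {h k : ℝ → ℝ} {d : ℝ} (hd : ∀ s ∈ Icc (x 0) (x P), dist (h s) (k s) ≤ d) {u : ℝ}
    (hu : u ∈ Icc (x 0) (x P)) :
    dist (readBajraktarevic P x a b F h u) (readBajraktarevic P x a b F k u) ≤ K * d := by
  obtain ⟨hp1, hpP, hup⟩ := pieceIndex_spec hx hP hu
  have hs := (div_sub_mem_Icc_of_mem_Icc_sub_one (ha _ hp1 hpP) (hl0 _ hp1 hpP)
    (hlP _ hp1 hpP) hup).1
  exact ((hL _ hp1 hpP _ hs).dist_le_mul _ _).trans (mul_le_mul_of_nonneg_left (hd _ hs) K.2)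

theorem eqOn_readBajraktarevic_iff (hx : StrictMonoOn x (Iic P)) (hP : 1 ≤ P)
    (ha : ∀ p, 1 ≤ p → p ≤ P → 0 < a p)
    (hl0 : ∀ p, 1 ≤ p → p ≤ P → a p * x 0 + b p = x (p - 1))
    (hlP : ∀ p, 1 ≤ p → p ≤ P → a p * x P + b p = x p)
    (hF0 : ∀ p, 1 ≤ p → p ≤ P → F p (x 0) (y 0) = y (p - 1))
    (hFP : ∀ p, 1 ≤ p → p ≤ P → F p (x P) (y P) = y p)
    (h0 : h (x 0) = y 0) (hhP : h (x P) = y P) :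
    EqOn (readBajraktarevic P x a b F h) h (Icc (x 0) (x P)) ↔
      ∀ p, 1 ≤ p → p ≤ P → ∀ s ∈ Icc (x 0) (x P), h (a p * s + b p) = F p s (h s) := by
  constructor
  · intro hfix p hp1 hpP s hs
    have hu : a p * s + b p ∈ Icc (x 0) (x P) := Icc_sub_one_subset_Icc hx.monotoneOn hpP
      (mul_add_mem_Icc_sub_one (ha p hp1 hpP) (hl0 p hp1 hpP) (hlP p hp1 hpP) hs)
    rw [← hfix hu, readBajraktarevic_affine hx hP ha hl0 hlP hF0 hFP h0 hhP hp1 hpP hs]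
  · intro hfun u hu
    obtain ⟨hp1, hpP, hup⟩ := pieceIndex_spec hx.monotoneOn hP hu
    obtain ⟨hs, hsu⟩ := div_sub_mem_Icc_of_mem_Icc_sub_one (ha _ hp1 hpP) (hl0 _ hp1 hpP)
      (hlP _ hp1 hpP) hup
    rw [← hsu, readBajraktarevic_affine hx hP ha hl0 hlP hF0 hFP h0 hhP hp1 hpP hs,
      hfun _ hp1 hpP _ hs]

end ReadBajraktarevic

/-- under the Read–Bajraktarević hypotheses with contraction ratios
`t p < 1`, there exists a unique continuous function `g : [x 0, x P] → ℝ` with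
`g (x 0) = y 0`, `g (x P) = y P` satisfying the self-referential functional equation
`g (l p s) = F p s (g s)` for all `s ∈ [x 0, x P]` and all `p = 1, ..., P`
(equivalently, `g` is the unique fixed point of `T` in `C`). -/
theorem stmt_4 (P : ℕ) (hP : 1 ≤ P) (x y : ℕ → ℝ)
    (hx : ∀ i, i < P → x i < x (i + 1))
    (a b : ℕ → ℝ)
    (ha : ∀ p, 1 ≤ p → p ≤ P → 0 < a p)
    (hl0 : ∀ p, 1 ≤ p → p ≤ P → a p * x 0 + b p = x (p - 1))
    (hlP : ∀ p, 1 ≤ p → p ≤ P → a p * x P + b p = x p)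
    (F : ℕ → ℝ → ℝ → ℝ) (t : ℕ → ℝ)
    (hFcont : ∀ p, 1 ≤ p → p ≤ P → ∀ v : ℝ,
      ContinuousOn (fun s : ℝ => F p s v) (Set.Icc (x 0) (x P)))
    (hF0 : ∀ p, 1 ≤ p → p ≤ P → F p (x 0) (y 0) = y (p - 1))
    (hFP : ∀ p, 1 ≤ p → p ≤ P → F p (x P) (y P) = y p)
    (ht : ∀ p, 1 ≤ p → p ≤ P → 0 < t p ∧ t p < 1)
    (hFlip : ∀ p, 1 ≤ p → p ≤ P → ∀ s ∈ Set.Icc (x 0) (x P), ∀ u v : ℝ,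
      |F p s u - F p s v| ≤ t p * |u - v|) :
    ∃ g : ℝ → ℝ,
      (ContinuousOn g (Set.Icc (x 0) (x P)) ∧ g (x 0) = y 0 ∧ g (x P) = y P ∧
        ∀ p, 1 ≤ p → p ≤ P → ∀ s ∈ Set.Icc (x 0) (x P),
          g (a p * s + b p) = F p s (g s)) ∧
      ∀ g' : ℝ → ℝ,
        (ContinuousOn g' (Set.Icc (x 0) (x P)) ∧ g' (x 0) = y 0 ∧ g' (x P) = y P ∧
          ∀ p, 1 ≤ p → p ≤ P → ∀ s ∈ Set.Icc (x 0) (x P),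
            g' (a p * s + b p) = F p s (g' s)) →
        ∀ u ∈ Set.Icc (x 0) (x P), g' u = g u := by
  have hxs : StrictMonoOn x (Iic P) := strictMonoOn_Iic_of_lt_succ fun m hm => hx m hm
  obtain ⟨K, hK, htK⟩ := (Finset.Icc 1 P).exists_lt_one_forall_le (t := t) fun p hp =>
    (ht p (Finset.mem_Icc.1 hp).1 (Finset.mem_Icc.1 hp).2).2
  have hL : ∀ p, 1 ≤ p → p ≤ P → ∀ s ∈ Icc (x 0) (x P), LipschitzWith K (F p s) :=
    fun p hp1 hpP s hs => LipschitzWith.of_dist_le_mul fun u v => (hFlip p hp1 hpP s hs u v).trans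
      (mul_le_mul_of_nonneg_right (htK p (Finset.mem_Icc.2 ⟨hp1, hpP⟩)) (abs_nonneg _))
  obtain ⟨g, ⟨hg, hg0, hgP, hTg⟩, huniq⟩ :=
    exists_eqOn_of_contraction (hxs (by simp) (by simp) hP) (y 0) (y P)
      (readBajraktarevic P x a b F) hK
      (fun h hh h0 hhP =>
        ⟨continuousOn_readBajraktarevic hxs hP ha hl0 hlP hFcont hF0 hFP hL hh h0 hhP,
          readBajraktarevic_endpoints hxs hP ha hl0 hlP hF0 hFP h0 hhP⟩)
      (fun h k d hd u hu => dist_readBajraktarevic_le hxs.monotoneOn hP ha hl0 hlP hL hd hu)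
  refine ⟨g, ⟨hg, hg0, hgP,
    (eqOn_readBajraktarevic_iff hxs hP ha hl0 hlP hF0 hFP hg0 hgP).1 hTg⟩, ?_⟩
  rintro g' ⟨hg', hg'0, hg'P, hfun⟩
  exact huniq g' ⟨hg', hg'0, hg'P,
    (eqOn_readBajraktarevic_iff hxs hP ha hl0 hlP hF0 hFP hg'0 hg'P).2 hfun⟩
end

section
/- Let g : [x_0, x_P] → ℝ be the unique continuous fixed point of the Read–Bajraktarević operator T associated with interpolation data {(x_i, y_i) : i = 0,...,P} and maps l_p, F_p satisfying the endpoint conditions F_p(x_0, y_0) = y_{p-1}, F_p(x_P, y_P) = y_p. Then g interpolates the data: g(x_i) = y_i for every i = 0, 1, ..., P. -/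
/-- if `g` is the continuous fixed point of the Read–Bajraktarević
operator associated with interpolation data `(x i, y i)`, affine maps
`l p : s ↦ a p * s + b p` and maps `F p` satisfying the endpoint conditions
`F p (x 0) (y 0) = y (p-1)`, `F p (x P) (y P) = y p`, then `g` interpolates the data:
`g (x i) = y i` for every `i = 0, 1, ..., P`. -/
theorem stmt_5 (P : ℕ) (hP : 1 ≤ P) (x y : ℕ → ℝ)
    (hx : ∀ i, i < P → x i < x (i + 1))
    (a b : ℕ → ℝ)
    (ha : ∀ p, 1 ≤ p → p ≤ P → 0 < a p)
    (hl0 : ∀ p, 1 ≤ p → p ≤ P → a p * x 0 + b p = x (p - 1))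
    (hlP : ∀ p, 1 ≤ p → p ≤ P → a p * x P + b p = x p)
    (F : ℕ → ℝ → ℝ → ℝ) (t : ℕ → ℝ)
    (hFcont : ∀ p, 1 ≤ p → p ≤ P → ∀ v : ℝ,
      ContinuousOn (fun s : ℝ => F p s v) (Set.Icc (x 0) (x P)))
    (hF0 : ∀ p, 1 ≤ p → p ≤ P → F p (x 0) (y 0) = y (p - 1))
    (hFP : ∀ p, 1 ≤ p → p ≤ P → F p (x P) (y P) = y p)
    (ht : ∀ p, 1 ≤ p → p ≤ P → 0 < t p ∧ t p < 1)
    (hFlip : ∀ p, 1 ≤ p → p ≤ P → ∀ s ∈ Set.Icc (x 0) (x P), ∀ u v : ℝ,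
      |F p s u - F p s v| ≤ t p * |u - v|)
    (g : ℝ → ℝ) (hg : ContinuousOn g (Set.Icc (x 0) (x P)))
    (hg0 : g (x 0) = y 0) (hgP : g (x P) = y P)
    (hfix : ∀ p, 1 ≤ p → p ≤ P → ∀ s ∈ Set.Icc (x 0) (x P),
      g (a p * s + b p) = F p s (g s)) :
    ∀ i, i ≤ P → g (x i) = y i := by
  intro i hi
  have hmono : x 0 ≤ x P := by
    have : ∀ j, j ≤ P → x 0 ≤ x j := by
      intro j hj
      induction j with
      | zero => exact le_rfl
      | succ k ih =>
        exact le_trans (ih (Nat.le_of_succ_le hj)) (le_of_lt (hx k (Nat.lt_of_succ_le hj)))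
    exact this P le_rfl
  rcases Nat.eq_zero_or_pos i with h0 | h1
  · subst h0; exact hg0
  · have key := hfix i h1 hi (x P) ⟨hmono, le_rfl⟩
    rw [hlP i h1 hi, hgP, hFP i h1 hi] at key
    exact key
end

section
/- Let g : [x_0, x_P] → ℝ be the fractal interpolation function, i.e., the unique continuous function with g(x_0) = y_0, g(x_P) = y_P satisfying g(l_p(x)) = F_p(x, g(x)) for all x ∈ [x_0, x_P] and p = 1,...,P. Define Φ_p : [x_0, x_P] × ℝ → [x_0, x_P] × ℝ by Φ_p(x, y) = (l_p(x), F_p(x, y)). Then the graph G_g = {(x, g(x)) : x ∈ [x_0, x_P]} is a nonempty compact subset of ℝ² satisfying the invariance (attractor) equation G_g = ⋃_{p=1}^{P} Φ_p(G_g). -/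
/-!
The graph of `g` over `[x₀, x_P]` is the union of its graphs over the subintervals
`[x_{p-1}, x_p] = l_p [x₀, x_P]`, and the functional equation `g ∘ l_p = F_p(·, g)` says exactly
that `Φ_p` maps the graph over `[x₀, x_P]` onto the graph over `l_p [x₀, x_P]`.
-/

open Set

lemma monotoneOn_Iic_of_le_succ {α : Type*} [Preorder α] {x : ℕ → α} {n : ℕ}
    (hx : ∀ i < n, x i ≤ x (i + 1)) : MonotoneOn x (Iic n) := by
  intro i _ j hj hij
  induction j, hij using Nat.le_induction with
  | base => exact le_rfl
  | succ k _ ih => exact (ih (Nat.le_of_succ_le hj)).trans (hx k hj)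

lemma exists_mem_Icc_pred_of_mem_Icc {α : Type*} [LinearOrder α] {x : ℕ → α} {n : ℕ}
    (hn : 1 ≤ n) {s : α} (hs : s ∈ Icc (x 0) (x n)) :
    ∃ p ∈ Icc 1 n, s ∈ Icc (x (p - 1)) (x p) := by
  induction n, hn using Nat.le_induction with
  | base => exact ⟨1, ⟨le_rfl, le_rfl⟩, hs⟩
  | succ k _ ih =>
    by_cases hsk : s ≤ x k
    · obtain ⟨p, ⟨hp1, hpk⟩, hp⟩ := ih ⟨hs.1, hsk⟩
      exact ⟨p, ⟨hp1, hpk.trans k.le_succ⟩, hp⟩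
    · exact ⟨k + 1, ⟨by omega, le_rfl⟩, (not_le.1 hsk).le, hs.2⟩

lemma biUnion_Icc_pred_eq_Icc {α : Type*} [LinearOrder α] {x : ℕ → α} {n : ℕ}
    (hn : 1 ≤ n) (hx : ∀ i < n, x i ≤ x (i + 1)) :
    ⋃ p ∈ Icc 1 n, Icc (x (p - 1)) (x p) = Icc (x 0) (x n) := by
  have hmono := monotoneOn_Iic_of_le_succ hx
  refine Subset.antisymm (iUnion₂_subset fun p hp => Icc_subset_Icc ?_ ?_) fun s hs => ?_
  · exact hmono (Nat.zero_le n) ((Nat.sub_le p 1).trans hp.2) (Nat.zero_le _)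
  · exact hmono hp.2 self_mem_Iic hp.2
  · obtain ⟨p, hp, hsp⟩ := exists_mem_Icc_pred_of_mem_Icc hn hs
    exact mem_biUnion hp hsp

lemma image_graphOn_of_map_eq {α β : Type*} {g : α → β} {l : α → α} {F : α → β → β}
    {s : Set α} (h : ∀ u ∈ s, g (l u) = F u (g u)) :
    (fun z : α × β => (l z.1, F z.1 z.2)) '' s.graphOn g = (l '' s).graphOn g := by
  simp only [graphOn, image_image]
  exact image_congr fun u hu => by rw [h u hu]

theorem stmt_6_general (P : ℕ) (hP : 1 ≤ P) (x : ℕ → ℝ)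
    (hx : ∀ i, i < P → x i < x (i + 1))
    (a b : ℕ → ℝ)
    (ha : ∀ p, 1 ≤ p → p ≤ P → 0 < a p)
    (hl0 : ∀ p, 1 ≤ p → p ≤ P → a p * x 0 + b p = x (p - 1))
    (hlP : ∀ p, 1 ≤ p → p ≤ P → a p * x P + b p = x p)
    (F : ℕ → ℝ → ℝ → ℝ)
    (g : ℝ → ℝ) (hg : ContinuousOn g (Set.Icc (x 0) (x P)))
    (hfix : ∀ p, 1 ≤ p → p ≤ P → ∀ s ∈ Set.Icc (x 0) (x P),
      g (a p * s + b p) = F p s (g s)) :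
    ((fun s : ℝ => (s, g s)) '' Set.Icc (x 0) (x P)).Nonempty ∧
    IsCompact ((fun s : ℝ => (s, g s)) '' Set.Icc (x 0) (x P)) ∧
    (fun s : ℝ => (s, g s)) '' Set.Icc (x 0) (x P) =
      ⋃ p ∈ Set.Icc 1 P,
        (fun z : ℝ × ℝ => (a p * z.1 + b p, F p z.1 z.2)) ''
          ((fun s : ℝ => (s, g s)) '' Set.Icc (x 0) (x P)) := by
  have hstep : ∀ i < P, x i ≤ x (i + 1) := fun i hi => (hx i hi).le
  have hx0P : x 0 ≤ x P :=
    monotoneOn_Iic_of_le_succ hstep (Nat.zero_le P) self_mem_Iic (Nat.zero_le P)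
  refine ⟨(nonempty_Icc.2 hx0P).image _,
    isCompact_Icc.image_of_continuousOn (continuousOn_id.prodMk hg), ?_⟩
  have himage : ∀ p ∈ Icc 1 P, (a p * · + b p) '' Icc (x 0) (x P) = Icc (x (p - 1)) (x p) :=
    fun p ⟨hp1, hpP⟩ => by rw [image_affine_Icc' (ha p hp1 hpP), hl0 p hp1 hpP, hlP p hp1 hpP]
  calc (Icc (x 0) (x P)).graphOn g
      = (⋃ p ∈ Icc 1 P, Icc (x (p - 1)) (x p)).graphOn g := by
        rw [biUnion_Icc_pred_eq_Icc hP hstep]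
    _ = ⋃ p ∈ Icc 1 P, (Icc (x (p - 1)) (x p)).graphOn g := image_iUnion₂ _ _
    _ = _ := iUnion₂_congr fun p hp => by
        rw [← himage p hp]
        exact (image_graphOn_of_map_eq (hfix p hp.1 hp.2)).symm

/-- let `g` be the fractal interpolation function, i.e. the continuous
function with `g (x 0) = y 0`, `g (x P) = y P` satisfying `g (l p s) = F p s (g s)`
for all `s ∈ [x 0, x P]`, `p = 1, ..., P`, and let
`Φ p (u, v) = (l p u, F p u v) = (a p * u + b p, F p u v)`. Then the graph
`G = {(s, g s) : s ∈ [x 0, x P]}` is a nonempty compact subset of ℝ² satisfying the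
invariance (attractor) equation `G = ⋃_{p=1}^{P} Φ p (G)`. -/
theorem stmt_6 (P : ℕ) (hP : 1 ≤ P) (x y : ℕ → ℝ)
    (hx : ∀ i, i < P → x i < x (i + 1))
    (a b : ℕ → ℝ)
    (ha : ∀ p, 1 ≤ p → p ≤ P → 0 < a p)
    (hl0 : ∀ p, 1 ≤ p → p ≤ P → a p * x 0 + b p = x (p - 1))
    (hlP : ∀ p, 1 ≤ p → p ≤ P → a p * x P + b p = x p)
    (F : ℕ → ℝ → ℝ → ℝ) (t : ℕ → ℝ)
    (hFcont : ∀ p, 1 ≤ p → p ≤ P →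
      ContinuousOn (fun z : ℝ × ℝ => F p z.1 z.2) (Set.Icc (x 0) (x P) ×ˢ Set.univ))
    (hF0 : ∀ p, 1 ≤ p → p ≤ P → F p (x 0) (y 0) = y (p - 1))
    (hFP : ∀ p, 1 ≤ p → p ≤ P → F p (x P) (y P) = y p)
    (ht : ∀ p, 1 ≤ p → p ≤ P → 0 < t p ∧ t p < 1)
    (hFlip : ∀ p, 1 ≤ p → p ≤ P → ∀ s ∈ Set.Icc (x 0) (x P), ∀ u v : ℝ,
      |F p s u - F p s v| ≤ t p * |u - v|)
    (g : ℝ → ℝ) (hg : ContinuousOn g (Set.Icc (x 0) (x P)))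
    (hg0 : g (x 0) = y 0) (hgP : g (x P) = y P)
    (hfix : ∀ p, 1 ≤ p → p ≤ P → ∀ s ∈ Set.Icc (x 0) (x P),
      g (a p * s + b p) = F p s (g s)) :
    ((fun s : ℝ => (s, g s)) '' Set.Icc (x 0) (x P)).Nonempty ∧
    IsCompact ((fun s : ℝ => (s, g s)) '' Set.Icc (x 0) (x P)) ∧
    (fun s : ℝ => (s, g s)) '' Set.Icc (x 0) (x P) =
      ⋃ p ∈ Set.Icc 1 P,
        (fun z : ℝ × ℝ => (a p * z.1 + b p, F p z.1 z.2)) ''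
          ((fun s : ℝ => (s, g s)) '' Set.Icc (x 0) (x P)) :=
  stmt_6_general P hP x hx a b ha hl0 hlP F g hg hfix
end
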